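/- Let Z be a real d×d matrix such that |exp(tZ) ξ| ≤ e^{−ct} |ξ| for all t ≥ 0 and ξ ∈ ℝ^d, for some constant c > 0. Let ψ be the Lévy symbol associated to α ∈ ℝ^d, a real symmetric positive semidefinite d×d matrix A, and a Lévy measure ν on ℝ^d satisfying ∫_{|η|>1} ln|η| ν(dη) < ∞. Let μ₀ be any probability measure on ℝ^d. Then for every ξ ∈ ℝ^d, lim_{t→∞} exp( ∫₀ᵗ ψ(exp(τZ) ξ) dτ ) · charFun(μ₀)(exp(tZ) ξ) = exp( ∫₀^∞ ψ(exp(τZ) ξ) dτ ); in particular the limit does not depend on μ₀. -/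

import Mathlib

open MeasureTheory Matrix Filter ComplexOrder

/-- The matrix semigroup `S_t = exp (t Z)` generated by a real `d × d` matrix `Z`. -/
noncomputable def expm {d : ℕ} (Z : Matrix (Fin d) (Fin d) ℝ) (t : ℝ) :
    Matrix (Fin d) (Fin d) ℝ :=
  NormedSpace.exp (t • Z)

/-- The Euclidean norm on `ℝ^d`. -/
noncomputable def eucNorm {d : ℕ} (x : Fin d → ℝ) : ℝ :=
  Real.sqrt (∑ i, x i ^ 2)

/-- The characteristic function of a measure on `ℝ^d`. -/
noncomputable def charFun {d : ℕ} (μ : Measure (Fin d → ℝ)) (ξ : Fin d → ℝ) : ℂ :=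
  ∫ x, Complex.exp (Complex.I * ((x ⬝ᵥ ξ : ℝ) : ℂ)) ∂μ

/-- Convolution of two measures on `ℝ^d`. -/
noncomputable def mconv {d : ℕ} (μ ρ : Measure (Fin d → ℝ)) : Measure (Fin d → ℝ) :=
  (μ.prod ρ).map fun p => p.1 + p.2

/-- The `m`-fold convolution power of a measure on `ℝ^d`. -/
noncomputable def convPow {d : ℕ} (ρ : Measure (Fin d → ℝ)) : ℕ → Measure (Fin d → ℝ)
  | 0 => Measure.dirac 0
  | n + 1 => mconv ρ (convPow ρ n)

/-- A probability measure on `ℝ^d` is infinitely divisible if for every `m ≥ 1` it is an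
`m`-fold convolution power of some probability measure. -/
def InfinitelyDivisible {d : ℕ} (μ : Measure (Fin d → ℝ)) : Prop :=
  ∀ m : ℕ, 1 ≤ m → ∃ ρ : Measure (Fin d → ℝ), IsProbabilityMeasure ρ ∧ convPow ρ m = μ

/-- `g : ℝ^d → ℂ` is twisted positive definite with respect to the antisymmetric form `Δ`. -/
def TwistedPosDef {d : ℕ} (Δ : Matrix (Fin d) (Fin d) ℝ) (g : (Fin d → ℝ) → ℂ) : Prop :=
  ∀ (N : ℕ) (ξ : Fin N → (Fin d → ℝ)) (c : Fin N → ℂ),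
    0 ≤ ∑ k : Fin N, ∑ l : Fin N, (starRingEnd ℂ) (c k) * g (ξ l - ξ k) *
      Complex.exp (Complex.I / 2 * (((ξ k) ⬝ᵥ (Δ.mulVec (ξ l)) : ℝ) : ℂ)) * c l

/-- A Lévy measure on `ℝ^d`. -/
def IsLevyMeasure {d : ℕ} (ν : Measure (Fin d → ℝ)) : Prop :=
  ν {0} = 0 ∧
  (∫⁻ η in {η : Fin d → ℝ | eucNorm η < 1}, ENNReal.ofReal (eucNorm η ^ 2) ∂ν) < ⊤ ∧
  ν {η : Fin d → ℝ | 1 ≤ eucNorm η} < ⊤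

/-- The Lévy symbol associated to a generating triplet `(A, ν, α)`. -/
noncomputable def levySymbol {d : ℕ} (α : Fin d → ℝ) (A : Matrix (Fin d) (Fin d) ℝ)
    (ν : Measure (Fin d → ℝ)) (ξ : Fin d → ℝ) : ℂ :=
  Complex.I * ((α ⬝ᵥ ξ : ℝ) : ℂ) - (1 / 2 : ℂ) * ((ξ ⬝ᵥ (A.mulVec ξ) : ℝ) : ℂ) +
    ∫ η, (Complex.exp (Complex.I * ((η ⬝ᵥ ξ : ℝ) : ℂ)) - 1 -
      Complex.I * ((({η : Fin d → ℝ | eucNorm η < 1}).indicator (fun η' => η' ⬝ᵥ ξ) η : ℝ) : ℂ)) ∂ν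

/-- `Ψ` admits the Lévy–Khinchine representation with generating triplet `(A, ν, α)`. -/
def HasTriplet {d : ℕ} (Ψ : (Fin d → ℝ) → ℂ) (A : Matrix (Fin d) (Fin d) ℝ)
    (ν : Measure (Fin d → ℝ)) (α : Fin d → ℝ) : Prop :=
  A.IsSymm ∧ A.PosSemidef ∧ ν {0} = 0 ∧
  (∫⁻ η, ENNReal.ofReal (min (eucNorm η ^ 2) 1) ∂ν) < ⊤ ∧
  ∀ ξ, Ψ ξ = levySymbol α A ν ξ

/-!
Write `ψ` for the Lévy symbol and `S_τ = exp (τ Z)`. Since `S_t ξ → 0`, the factor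
`charFun μ₀ (S_t ξ)` tends to `charFun μ₀ 0 = 1`, and everything reduces to the integrability of
`τ ↦ ψ (S_τ ξ)` on `(0, ∞)`. The drift and Gaussian parts are `O(e^{-cτ})`. The jump part is the
`ν`-integral of `F (τ, η) = e^{i⟨η, S_τ ξ⟩} - 1 - i⟨η, S_τ ξ⟩ 1_{|η|<1}`, and `F` is integrable on
`(0, ∞) × ν` by Tonelli: for small jumps `|F| = O(|η|² e^{-2cτ})`, for large ones
`|F| ≤ min 2 (|ξ| |η| e^{-cτ})`, whose time integral is `O(1 + log |η|)`; this is where the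
logarithmic moment enters. Lévy measures are σ-finite, so Fubini applies.
-/

open Set

section EuclideanNorm

variable {d : ℕ}

lemma eucNorm_eq_norm_toLp (x : Fin d → ℝ) : eucNorm x = ‖WithLp.toLp 2 x‖ := by
  simp [eucNorm, EuclideanSpace.norm_eq]

lemma eucNorm_nonneg (x : Fin d → ℝ) : 0 ≤ eucNorm x := Real.sqrt_nonneg _

@[fun_prop]
lemma continuous_eucNorm : Continuous (eucNorm (d := d)) := by
  simp only [funext eucNorm_eq_norm_toLp]
  fun_prop

lemma abs_dotProduct_le_eucNorm_mul (x y : Fin d → ℝ) :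
    |x ⬝ᵥ y| ≤ eucNorm x * eucNorm y := by
  simpa [eucNorm_eq_norm_toLp, EuclideanSpace.inner_toLp_toLp, mul_comm]
    using abs_real_inner_le_norm (WithLp.toLp 2 y) (WithLp.toLp 2 x)

lemma abs_dotProduct_mulVec_le (A : Matrix (Fin d) (Fin d) ℝ) (x : Fin d → ℝ) :
    |x ⬝ᵥ A *ᵥ x| ≤ ‖Matrix.toEuclideanCLM (𝕜 := ℝ) A‖ * eucNorm x ^ 2 := by
  set T := Matrix.toEuclideanCLM (𝕜 := ℝ) A
  have h := abs_real_inner_le_norm (WithLp.toLp 2 x) (T (WithLp.toLp 2 x))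
  rw [Matrix.inner_toEuclideanCLM] at h
  calc |x ⬝ᵥ A *ᵥ x| ≤ ‖WithLp.toLp 2 x‖ * ‖T (WithLp.toLp 2 x)‖ := h
    _ ≤ ‖WithLp.toLp 2 x‖ * (‖T‖ * ‖WithLp.toLp 2 x‖) := by gcongr; exact T.le_opNorm _
    _ = ‖T‖ * eucNorm x ^ 2 := by rw [eucNorm_eq_norm_toLp]; ring

lemma eucNorm_pos {x : Fin d → ℝ} (hx : x ≠ 0) : 0 < eucNorm x := by
  simpa [eucNorm_eq_norm_toLp] using hx

lemma tendsto_nhds_zero_of_eucNorm_le {f : ℝ → Fin d → ℝ} {g : ℝ → ℝ}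
    (hf : ∀ᶠ t in atTop, eucNorm (f t) ≤ g t) (hg : Tendsto g atTop (nhds 0)) :
    Tendsto f atTop (nhds 0) := by
  have : Tendsto (fun t => WithLp.toLp 2 (f t)) atTop (nhds 0) :=
    squeeze_zero_norm' (by simpa [eucNorm_eq_norm_toLp] using hf) hg
  exact ((PiLp.continuous_ofLp 2 _).tendsto 0).comp this

end EuclideanNorm

lemma Complex.norm_exp_I_mul_ofReal_sub_one_sub_le (x : ℝ) :
    ‖Complex.exp (Complex.I * x) - 1 - Complex.I * x‖ ≤ 2 * x ^ 2 := by
  rcases le_or_gt |x| 1 with hx | hx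
  · have h := Complex.norm_exp_sub_one_sub_id_le (x := Complex.I * x) (by simpa using hx)
    simp only [norm_mul, Complex.norm_I, Complex.norm_real, one_mul, Real.norm_eq_abs,
      sq_abs] at h
    nlinarith [sq_nonneg x]
  · calc ‖Complex.exp (Complex.I * x) - 1 - Complex.I * x‖
        ≤ ‖Complex.exp (Complex.I * x) - 1‖ + ‖Complex.I * x‖ := norm_sub_le _ _
      _ ≤ |x| + |x| := by
          gcongr
          · exact Real.norm_eq_abs x ▸ Real.norm_exp_I_mul_ofReal_sub_one_le
          · simp
      _ ≤ 2 * x ^ 2 := by nlinarith [sq_abs x]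

section LevyIntegrand

variable {d : ℕ}

def smallJumps (d : ℕ) : Set (Fin d → ℝ) := {η | eucNorm η < 1}

lemma measurableSet_smallJumps : MeasurableSet (smallJumps d) :=
  measurableSet_lt continuous_eucNorm.measurable measurable_const

lemma compl_smallJumps : (smallJumps d)ᶜ = {η | 1 ≤ eucNorm η} := by
  ext η; simp [smallJumps]

noncomputable def levyIntegrand (ξ η : Fin d → ℝ) : ℂ :=
  Complex.exp (Complex.I * ((η ⬝ᵥ ξ : ℝ) : ℂ)) - 1 -
    Complex.I * (((smallJumps d).indicator (fun η' => η' ⬝ᵥ ξ) η : ℝ) : ℂ)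

lemma levySymbol_eq (α : Fin d → ℝ) (A : Matrix (Fin d) (Fin d) ℝ) (ν : Measure (Fin d → ℝ))
    (ξ : Fin d → ℝ) :
    levySymbol α A ν ξ = Complex.I * ((α ⬝ᵥ ξ : ℝ) : ℂ) - (1 / 2 : ℂ) * ((ξ ⬝ᵥ A *ᵥ ξ : ℝ) : ℂ)
      + ∫ η, levyIntegrand ξ η ∂ν :=
  rfl

lemma measurable_levyIntegrand :
    Measurable fun p : (Fin d → ℝ) × (Fin d → ℝ) => levyIntegrand p.1 p.2 := by
  have hdot : Continuous fun p : (Fin d → ℝ) × (Fin d → ℝ) => p.2 ⬝ᵥ p.1 := by fun_prop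
  have hind : Measurable fun p : (Fin d → ℝ) × (Fin d → ℝ) =>
      (smallJumps d).indicator (fun η' => η' ⬝ᵥ p.1) p.2 :=
    hdot.measurable.indicator (measurableSet_smallJumps.preimage measurable_snd)
  unfold levyIntegrand
  fun_prop

lemma norm_levyIntegrand_le_of_mem {ξ η : Fin d → ℝ} (hη : η ∈ smallJumps d) :
    ‖levyIntegrand ξ η‖ ≤ 2 * eucNorm ξ ^ 2 * eucNorm η ^ 2 := by
  rw [levyIntegrand, Set.indicator_of_mem hη]
  refine (Complex.norm_exp_I_mul_ofReal_sub_one_sub_le _).trans ?_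
  have := abs_dotProduct_le_eucNorm_mul η ξ
  nlinarith [sq_abs (η ⬝ᵥ ξ), abs_nonneg (η ⬝ᵥ ξ)]

lemma norm_levyIntegrand_le_of_notMem {ξ η : Fin d → ℝ} (hη : η ∉ smallJumps d) :
    ‖levyIntegrand ξ η‖ ≤ min 2 (eucNorm ξ * eucNorm η) := by
  rw [levyIntegrand, Set.indicator_of_notMem hη, Complex.ofReal_zero, mul_zero, sub_zero]
  refine le_min ?_ ?_
  · refine (norm_sub_le _ _).trans ?_
    rw [mul_comm, Complex.norm_exp_ofReal_mul_I, norm_one]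
    norm_num
  · refine Real.norm_exp_I_mul_ofReal_sub_one_le.trans ?_
    rw [Real.norm_eq_abs, mul_comm]
    exact abs_dotProduct_le_eucNorm_mul η ξ

end LevyIntegrand

namespace IsLevyMeasure

variable {d : ℕ} {ν : Measure (Fin d → ℝ)}

lemma measure_le_eucNorm_lt_top (hν : IsLevyMeasure ν) {r : ℝ} (hr : 0 < r) :
    ν {η | r ≤ eucNorm η} < ⊤ := by
  obtain ⟨-, hsmall, hbig⟩ := hν
  have hsub : {η | r ≤ eucNorm η} ⊆ {η | 1 ≤ eucNorm η} ∪
      {η | ENNReal.ofReal (r ^ 2) ≤ ENNReal.ofReal (eucNorm η ^ 2)} ∩ smallJumps d := by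
    intro η hη
    by_cases h1 : 1 ≤ eucNorm η
    · exact Or.inl h1
    · refine Or.inr ⟨ENNReal.ofReal_le_ofReal (pow_le_pow_left₀ hr.le hη 2), not_le.1 h1⟩
  have hmarkov : (ν.restrict (smallJumps d))
      {η | ENNReal.ofReal (r ^ 2) ≤ ENNReal.ofReal (eucNorm η ^ 2)} < ⊤ :=
    (meas_ge_le_lintegral_div (by fun_prop) (by simp [hr.ne']) ENNReal.ofReal_ne_top).trans_lt
      (ENNReal.div_lt_top hsmall.ne (by simp [hr.ne']))
  rw [Measure.restrict_apply' measurableSet_smallJumps] at hmarkov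
  exact (measure_mono hsub).trans_lt
    ((measure_union_le _ _).trans_lt (ENNReal.add_lt_top.2 ⟨hbig, hmarkov⟩))

lemma sigmaFinite (hν : IsLevyMeasure ν) : SigmaFinite ν := by
  refine Measure.sigmaFinite_of_countable
    (S := insert {0} (range fun n : ℕ => {η | 1 / ((n : ℝ) + 1) ≤ eucNorm η}))
    ((countable_range _).insert _) ?_ ?_
  · rintro s (rfl | ⟨n, rfl⟩)
    · rw [hν.1]; exact ENNReal.zero_lt_top
    · exact hν.measure_le_eucNorm_lt_top (by positivity)
  · refine eq_univ_of_forall fun η => ?_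
    rcases eq_or_ne η 0 with rfl | hη
    · exact mem_sUnion_of_mem (mem_singleton 0) (mem_insert _ _)
    · obtain ⟨n, hn⟩ := exists_nat_one_div_lt (eucNorm_pos hη)
      exact mem_sUnion.2 ⟨_, mem_insert_of_mem _ ⟨n, rfl⟩, hn.le⟩

end IsLevyMeasure

section TimeIntegrals

variable {c : ℝ}

lemma lintegral_Ioi_exp_neg_mul (hc : 0 < c) (T : ℝ) :
    ∫⁻ τ in Ioi T, ENNReal.ofReal (Real.exp (-c * τ)) =
      ENNReal.ofReal (Real.exp (-c * T) / c) := by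
  rw [← ofReal_integral_eq_lintegral_ofReal (exp_neg_integrableOn_Ioi T hc)
    (ae_of_all _ fun _ => (Real.exp_pos _).le), integral_exp_mul_Ioi (by linarith) T,
    neg_div_neg_eq]

lemma lintegral_Ioi_min_two_exp_le (hc : 0 < c) (M : ℝ) :
    ∫⁻ τ in Ioi 0, ENNReal.ofReal (min 2 (M * Real.exp (-c * τ))) ≤
      ENNReal.ofReal ((2 * Real.posLog M + 1) / c) := by
  set T := Real.posLog M / c
  have hT : 0 ≤ T := div_nonneg Real.posLog_nonneg hc.le
  have hcT : c * T = Real.posLog M := mul_div_cancel₀ _ hc.ne'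
  have hM : M ≤ Real.exp (c * T) := by
    rw [hcT]
    exact (Real.le_exp_log M).trans (Real.exp_le_exp.2 (le_max_right _ _))
  rw [← Ioc_union_Ioi_eq_Ioi hT, lintegral_union measurableSet_Ioi (Ioc_disjoint_Ioi le_rfl)]
  -- below `T` the integrand is at most `2`, beyond it at most `exp (c * (T - τ))`
  calc _ ≤ (∫⁻ τ in Ioc 0 T, ENNReal.ofReal 2) +
        ∫⁻ τ in Ioi T, ENNReal.ofReal (Real.exp (c * T)) * ENNReal.ofReal (Real.exp (-c * τ)) := by
        gcongr with τ τ
        · exact min_le_left _ _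
        · rw [← ENNReal.ofReal_mul (Real.exp_pos _).le]
          gcongr
          exact (min_le_right _ _).trans (by gcongr)
    _ = ENNReal.ofReal (2 * T + 1 / c) := by
        rw [setLIntegral_const, Real.volume_Ioc, lintegral_const_mul _ (by fun_prop),
          lintegral_Ioi_exp_neg_mul hc, ← ENNReal.ofReal_mul zero_le_two,
          ← ENNReal.ofReal_mul (Real.exp_pos _).le, ← ENNReal.ofReal_add (by positivity)
          (by positivity), mul_div_assoc', ← Real.exp_add]
        congr 2
        · ring
        · ring_nf; simp
    _ = _ := by rw [← hcT]; congr 1; field_simp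

end TimeIntegrals

section DecayingCurve

variable {d : ℕ} {c R : ℝ} {ζ : ℝ → Fin d → ℝ} {ν : Measure (Fin d → ℝ)}

lemma lintegral_Ioi_enorm_levyIntegrand_le_of_mem (hc : 0 < c)
    (hζ : ∀ τ ∈ Ioi (0 : ℝ), eucNorm (ζ τ) ≤ Real.exp (-c * τ) * R)
    {η : Fin d → ℝ} (hη : η ∈ smallJumps d) :
    ∫⁻ τ in Ioi 0, ‖levyIntegrand (ζ τ) η‖ₑ ≤
      ENNReal.ofReal (R ^ 2 / c) * ENNReal.ofReal (eucNorm η ^ 2) := by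
  calc ∫⁻ τ in Ioi 0, ‖levyIntegrand (ζ τ) η‖ₑ
      ≤ ∫⁻ τ in Ioi 0, ENNReal.ofReal (2 * R ^ 2 * eucNorm η ^ 2) *
          ENNReal.ofReal (Real.exp (-(2 * c) * τ)) := by
        refine setLIntegral_mono' measurableSet_Ioi fun τ hτ => ?_
        rw [← ofReal_norm, ← ENNReal.ofReal_mul (by positivity)]
        refine ENNReal.ofReal_le_ofReal ((norm_levyIntegrand_le_of_mem hη).trans ?_)
        have hsq : eucNorm (ζ τ) ^ 2 ≤ (Real.exp (-c * τ) * R) ^ 2 :=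
          pow_le_pow_left₀ (eucNorm_nonneg _) (hζ τ hτ) 2
        have hexp : Real.exp (-c * τ) ^ 2 = Real.exp (-(2 * c) * τ) := by
          rw [← Real.exp_nat_mul]; ring_nf
        rw [mul_pow, hexp] at hsq
        have := sq_nonneg (eucNorm η)
        nlinarith
    _ = ENNReal.ofReal (R ^ 2 / c) * ENNReal.ofReal (eucNorm η ^ 2) := by
        rw [lintegral_const_mul _ (by fun_prop), lintegral_Ioi_exp_neg_mul (by positivity),
          ← ENNReal.ofReal_mul (by positivity), ← ENNReal.ofReal_mul (by positivity)]
        congr 1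
        field_simp
        simp

lemma lintegral_Ioi_enorm_levyIntegrand_le_of_notMem (hc : 0 < c)
    (hζ : ∀ τ ∈ Ioi (0 : ℝ), eucNorm (ζ τ) ≤ Real.exp (-c * τ) * R)
    {η : Fin d → ℝ} (hη : η ∉ smallJumps d) :
    ∫⁻ τ in Ioi 0, ‖levyIntegrand (ζ τ) η‖ₑ ≤
      ENNReal.ofReal ((2 * Real.posLog R + 1) / c) +
        ENNReal.ofReal (2 / c) * ENNReal.ofReal (Real.log (eucNorm η)) := by
  have hη1 : 1 ≤ eucNorm η := by simpa [smallJumps] using hη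
  calc ∫⁻ τ in Ioi 0, ‖levyIntegrand (ζ τ) η‖ₑ
      ≤ ∫⁻ τ in Ioi 0, ENNReal.ofReal (min 2 (R * eucNorm η * Real.exp (-c * τ))) := by
        refine setLIntegral_mono' measurableSet_Ioi fun τ hτ => ?_
        rw [← ofReal_norm]
        refine ENNReal.ofReal_le_ofReal ((norm_levyIntegrand_le_of_notMem hη).trans ?_)
        refine min_le_min le_rfl ((mul_le_mul_of_nonneg_right (hζ τ hτ) (eucNorm_nonneg η)).trans
          (le_of_eq (by ring)))
    _ ≤ ENNReal.ofReal ((2 * Real.posLog (R * eucNorm η) + 1) / c) :=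
        lintegral_Ioi_min_two_exp_le hc _
    _ ≤ ENNReal.ofReal ((2 * Real.posLog R + 1) / c + 2 / c * Real.log (eucNorm η)) := by
        gcongr
        have := Real.posLog_mul (x := R) (y := eucNorm η)
        rw [Real.posLog_eq_log (x := eucNorm η) (by rwa [abs_of_nonneg (eucNorm_nonneg η)])] at this
        field_simp
        linarith
    _ ≤ _ := by
        rw [← ENNReal.ofReal_mul (by positivity)]
        exact ENNReal.ofReal_add_le

lemma lintegral_log_eucNorm_compl_smallJumps_lt_top
    (hlog : (∫⁻ η in {η : Fin d → ℝ | 1 < eucNorm η},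
      ENNReal.ofReal (Real.log (eucNorm η)) ∂ν) < ⊤) :
    ∫⁻ η in (smallJumps d)ᶜ, ENNReal.ofReal (Real.log (eucNorm η)) ∂ν < ⊤ := by
  refine (setLIntegral_le_lintegral _ _).trans_lt ?_
  rwa [← setLIntegral_eq_of_support_subset]
  intro η hη
  by_contra h
  exact hη (ENNReal.ofReal_eq_zero.2 (Real.log_nonpos (eucNorm_nonneg η) (not_lt.1 h)))

lemma integrable_levyIntegrand_comp (hν : IsLevyMeasure ν)
    (hlog : (∫⁻ η in {η : Fin d → ℝ | 1 < eucNorm η},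
      ENNReal.ofReal (Real.log (eucNorm η)) ∂ν) < ⊤)
    (hc : 0 < c) (hζm : Measurable ζ)
    (hζ : ∀ τ ∈ Ioi (0 : ℝ), eucNorm (ζ τ) ≤ Real.exp (-c * τ) * R) :
    Integrable (fun p : ℝ × (Fin d → ℝ) => levyIntegrand (ζ p.1) p.2)
      ((volume.restrict (Ioi 0)).prod ν) := by
  have := hν.sigmaFinite
  have hmeas : Measurable fun p : ℝ × (Fin d → ℝ) => levyIntegrand (ζ p.1) p.2 :=
    measurable_levyIntegrand.comp (f := fun p : ℝ × (Fin d → ℝ) => (ζ p.1, p.2)) (by fun_prop)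
  refine ⟨hmeas.aestronglyMeasurable, ?_⟩
  rw [HasFiniteIntegral, lintegral_prod_symm _ hmeas.enorm.aemeasurable,
    ← lintegral_add_compl _ measurableSet_smallJumps]
  refine ENNReal.add_lt_top.2 ⟨?_, ?_⟩
  · calc _ ≤ ∫⁻ η in smallJumps d, ENNReal.ofReal (R ^ 2 / c) * ENNReal.ofReal (eucNorm η ^ 2) ∂ν :=
          setLIntegral_mono (by fun_prop) fun η hη =>
            lintegral_Ioi_enorm_levyIntegrand_le_of_mem hc hζ hη
      _ < ⊤ := by
          rw [lintegral_const_mul _ (by fun_prop)]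
          exact ENNReal.mul_lt_top ENNReal.ofReal_lt_top hν.2.1
  · calc _ ≤ ∫⁻ η in (smallJumps d)ᶜ, ENNReal.ofReal ((2 * Real.posLog R + 1) / c) +
            ENNReal.ofReal (2 / c) * ENNReal.ofReal (Real.log (eucNorm η)) ∂ν :=
          setLIntegral_mono (by fun_prop) fun η hη =>
            lintegral_Ioi_enorm_levyIntegrand_le_of_notMem hc hζ hη
      _ < ⊤ := by
          rw [lintegral_add_left measurable_const, setLIntegral_const,
            lintegral_const_mul _ (by fun_prop), compl_smallJumps]
          refine ENNReal.add_lt_top.2 ⟨ENNReal.mul_lt_top ENNReal.ofReal_lt_top hν.2.2,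
            ENNReal.mul_lt_top ENNReal.ofReal_lt_top ?_⟩
          rw [← compl_smallJumps]
          exact lintegral_log_eucNorm_compl_smallJumps_lt_top hlog

lemma norm_I_mul_dotProduct_sub_half_quadForm_le (α : Fin d → ℝ) (A : Matrix (Fin d) (Fin d) ℝ)
    (x : Fin d → ℝ) :
    ‖Complex.I * ((α ⬝ᵥ x : ℝ) : ℂ) - (1 / 2 : ℂ) * ((x ⬝ᵥ A *ᵥ x : ℝ) : ℂ)‖ ≤
      eucNorm α * eucNorm x + ‖Matrix.toEuclideanCLM (𝕜 := ℝ) A‖ / 2 * eucNorm x ^ 2 := by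
  refine (norm_sub_le _ _).trans ?_
  simp only [norm_mul, Complex.norm_I, Complex.norm_real, Real.norm_eq_abs, one_mul]
  have h1 := abs_dotProduct_le_eucNorm_mul α x
  have h2 := abs_dotProduct_mulVec_le A x
  norm_num
  linarith

lemma integrableOn_levySymbol_comp (α : Fin d → ℝ) (A : Matrix (Fin d) (Fin d) ℝ)
    (hν : IsLevyMeasure ν)
    (hlog : (∫⁻ η in {η : Fin d → ℝ | 1 < eucNorm η},
      ENNReal.ofReal (Real.log (eucNorm η)) ∂ν) < ⊤)
    (hc : 0 < c) (hζm : Measurable ζ)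
    (hζ : ∀ τ ∈ Ioi (0 : ℝ), eucNorm (ζ τ) ≤ Real.exp (-c * τ) * R) :
    IntegrableOn (fun τ => levySymbol α A ν (ζ τ)) (Ioi 0) := by
  have := hν.sigmaFinite
  simp only [levySymbol_eq]
  refine Integrable.add ?_ (integrable_levyIntegrand_comp hν hlog hc hζm hζ).integral_prod_left
  set K := ‖Matrix.toEuclideanCLM (𝕜 := ℝ) A‖
  have hcont : Continuous fun x : Fin d → ℝ =>
      Complex.I * ((α ⬝ᵥ x : ℝ) : ℂ) - (1 / 2 : ℂ) * ((x ⬝ᵥ A *ᵥ x : ℝ) : ℂ) := by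
    fun_prop
  refine Integrable.mono' ((exp_neg_integrableOn_Ioi 0 hc).const_mul
    (eucNorm α * R + K / 2 * R ^ 2)) (hcont.measurable.comp hζm).aestronglyMeasurable ?_
  filter_upwards [ae_restrict_mem measurableSet_Ioi] with τ hτ
  refine (norm_I_mul_dotProduct_sub_half_quadForm_le α A (ζ τ)).trans ?_
  have hr := hζ τ hτ
  have hr0 := eucNorm_nonneg (ζ τ)
  have he1 : Real.exp (-c * τ) ≤ 1 := Real.exp_le_one_iff.2 (by nlinarith [mem_Ioi.1 hτ])
  have he0 := Real.exp_pos (-c * τ)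
  have hR : 0 ≤ R := nonneg_of_mul_nonneg_right (hr0.trans hr) he0
  have hsq : eucNorm (ζ τ) ^ 2 ≤ Real.exp (-c * τ) * R ^ 2 := by
    calc eucNorm (ζ τ) ^ 2 ≤ (Real.exp (-c * τ) * R) ^ 2 := pow_le_pow_left₀ hr0 hr 2
      _ ≤ Real.exp (-c * τ) * R ^ 2 := by nlinarith [sq_nonneg R]
  have hK : 0 ≤ K := norm_nonneg _
  have hα := eucNorm_nonneg α
  calc eucNorm α * eucNorm (ζ τ) + K / 2 * eucNorm (ζ τ) ^ 2
      ≤ eucNorm α * (Real.exp (-c * τ) * R) + K / 2 * (Real.exp (-c * τ) * R ^ 2) := by gcongr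
    _ = (eucNorm α * R + K / 2 * R ^ 2) * Real.exp (-c * τ) := by ring

end DecayingCurve

section

attribute [local instance] Matrix.linftyOpNormedRing Matrix.linftyOpNormedAlgebra

lemma continuous_expm_mulVec {d : ℕ} (Z : Matrix (Fin d) (Fin d) ℝ) (ξ : Fin d → ℝ) :
    Continuous fun τ : ℝ => expm Z τ *ᵥ ξ :=
  (NormedSpace.exp_continuous.comp (continuous_id.smul continuous_const)).matrix_mulVec
    continuous_const

end

lemma charFun_zero {d : ℕ} (μ : Measure (Fin d → ℝ)) [IsProbabilityMeasure μ] :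
    charFun μ 0 = 1 := by
  simp [_root_.charFun]

lemma continuous_charFun {d : ℕ} (μ : Measure (Fin d → ℝ)) [IsFiniteMeasure μ] :
    Continuous (charFun μ) := by
  refine continuous_of_dominated (bound := fun _ => 1) (fun ξ => by fun_prop)
    (fun ξ => ae_of_all _ fun x => ?_) (integrable_const 1) (ae_of_all _ fun x => by fun_prop)
  rw [mul_comm, Complex.norm_exp_ofReal_mul_I]

theorem stmt17_general (d : ℕ) (Z : Matrix (Fin d) (Fin d) ℝ)
    (c : ℝ) (hc : 0 < c)
    (hcontr : ∀ t : ℝ, 0 ≤ t → ∀ ξ : Fin d → ℝ,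
      eucNorm ((expm Z t).mulVec ξ) ≤ Real.exp (-c * t) * eucNorm ξ)
    (α : Fin d → ℝ) (A : Matrix (Fin d) (Fin d) ℝ)
    (ν : Measure (Fin d → ℝ)) (hν : IsLevyMeasure ν)
    (hlog : (∫⁻ η in {η : Fin d → ℝ | 1 < eucNorm η},
      ENNReal.ofReal (Real.log (eucNorm η)) ∂ν) < ⊤)
    (μ₀ : Measure (Fin d → ℝ)) (hμ₀ : IsProbabilityMeasure μ₀) :
    ∀ ξ : Fin d → ℝ,
      Tendsto (fun t : ℝ =>
          Complex.exp (∫ τ in (0:ℝ)..t, levySymbol α A ν ((expm Z τ).mulVec ξ)) *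
            charFun μ₀ ((expm Z t).mulVec ξ))
        atTop
        (nhds (Complex.exp (∫ τ in Set.Ici (0:ℝ),
          levySymbol α A ν ((expm Z τ).mulVec ξ)))) := by
  intro ξ
  have hint : IntegrableOn (fun τ => levySymbol α A ν (expm Z τ *ᵥ ξ)) (Ioi 0) :=
    integrableOn_levySymbol_comp α A hν hlog hc (continuous_expm_mulVec Z ξ).measurable
      fun τ hτ => hcontr τ (le_of_lt hτ) ξ
  have hexp := (Complex.continuous_exp.tendsto _).comp
    (intervalIntegral_tendsto_integral_Ioi 0 hint tendsto_id)
  have hS : Tendsto (fun t => expm Z t *ᵥ ξ) atTop (nhds 0) :=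
    tendsto_nhds_zero_of_eucNorm_le ((eventually_ge_atTop 0).mono fun t ht => hcontr t ht ξ)
      (by simpa using (Real.tendsto_exp_atBot.comp
        (tendsto_id.const_mul_atTop_of_neg (neg_neg_of_pos hc))).mul_const (eucNorm ξ))
  have hchar := ((continuous_charFun μ₀).tendsto 0).comp hS
  rw [charFun_zero] at hchar
  rw [integral_Ici_eq_integral_Ioi]
  simpa using hexp.mul hchar

/-- approach to equilibrium — for any initial probability measure `μ₀`,
`exp(∫₀ᵗ ψ(S_τ ξ) dτ) · charFun(μ₀)(S_t ξ)` converges, as `t → ∞`, to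
`exp(∫₀^∞ ψ(S_τ ξ) dτ)`, independently of `μ₀`. -/
theorem stmt17 (d : ℕ) (hd : 0 < d) (Z : Matrix (Fin d) (Fin d) ℝ)
    (c : ℝ) (hc : 0 < c)
    (hcontr : ∀ t : ℝ, 0 ≤ t → ∀ ξ : Fin d → ℝ,
      eucNorm ((expm Z t).mulVec ξ) ≤ Real.exp (-c * t) * eucNorm ξ)
    (α : Fin d → ℝ) (A : Matrix (Fin d) (Fin d) ℝ) (hA : A.IsSymm) (hApsd : A.PosSemidef)
    (ν : Measure (Fin d → ℝ)) (hν : IsLevyMeasure ν)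
    (hlog : (∫⁻ η in {η : Fin d → ℝ | 1 < eucNorm η},
      ENNReal.ofReal (Real.log (eucNorm η)) ∂ν) < ⊤)
    (μ₀ : Measure (Fin d → ℝ)) (hμ₀ : IsProbabilityMeasure μ₀) :
    ∀ ξ : Fin d → ℝ,
      Tendsto (fun t : ℝ =>
          Complex.exp (∫ τ in (0:ℝ)..t, levySymbol α A ν ((expm Z τ).mulVec ξ)) *
            charFun μ₀ ((expm Z t).mulVec ξ))
        atTop
        (nhds (Complex.exp (∫ τ in Set.Ici (0:ℝ),
          levySymbol α A ν ((expm Z τ).mulVec ξ)))) :=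
  stmt17_general d Z c hc hcontr α A ν hν hlog μ₀ hμ₀
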